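/- arXiv:1011.4833 — 2 statements merged into one kernel-verified Lean document; each statement's English description precedes it below -/
import Mathlib

section
/- For all formulas F and G, F × G is classically equivalent to F ∨ G (every set of atoms satisfies one iff it satisfies the other), but F × G is not HT-equivalent to F ∨ G: for distinct atoms p and q, the theory {p ∨ q, q} has exactly one equilibrium model, namely ⟨{q},{q}⟩, whereas the theory {p × q, q} has exactly two equilibrium models, ⟨{q},{q}⟩ and ⟨{p,q},{p,q}⟩. -/
inductive Form (α : Type) : Type
  | atom : α → Form α
  | fls  : Form α
  | and  : Form α → Form α → Form α
  | or   : Form α → Form α → Form α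
  | imp  : Form α → Form α → Form α

namespace Form

variable {α : Type}

/-- ¬F abbreviates F → ⊥ -/
def neg (F : Form α) : Form α := imp F fls

/-- ⊤ abbreviates ⊥ → ⊥ -/
def tru : Form α := imp fls fls

/-- ordered disjunction F × G := F ∨ (¬F ∧ G) -/
def ox (F G : Form α) : Form α := or F (and (neg F) G)

/-- classical satisfaction -/
def csat (T : Set α) : Form α → Prop
  | atom p  => p ∈ T
  | fls     => False
  | and F G => csat T F ∧ csat T G
  | or F G  => csat T F ∨ csat T G
  | imp F G => csat T F → csat T G

/-- here-and-there satisfaction (for interpretations ⟨H,T⟩ with H ⊆ T) -/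
def htsat (H T : Set α) : Form α → Prop
  | atom p  => p ∈ H
  | fls     => False
  | and F G => htsat H T F ∧ htsat H T G
  | or F G  => htsat H T F ∨ htsat H T G
  | imp F G => (csat T F → csat T G) ∧ (¬ htsat H T F ∨ htsat H T G)

end Form

/-- HT-equivalence: satisfied by exactly the same HT-interpretations -/
def HTEquiv {α : Type} (F G : Form α) : Prop :=
  ∀ H T : Set α, H ⊆ T → (Form.htsat H T F ↔ Form.htsat H T G)

/-- ⟨T,T⟩ is an equilibrium model of the theory Γ -/
def EqModel {α : Type} (Γ : Set (Form α)) (T : Set α) : Prop :=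
  (∀ F ∈ Γ, Form.htsat T T F) ∧ ∀ H : Set α, H ⊂ T → ¬ (∀ F ∈ Γ, Form.htsat H T F)

/-- iterated ordered disjunction, associated to the left; ⊥ when empty -/
def oxList {α : Type} : List (Form α) → Form α
  | []      => Form.fls
  | a :: as => as.foldl Form.ox a

/-- iterated disjunction, associated to the left; ⊥ when empty -/
def orList {α : Type} : List (Form α) → Form α
  | []      => Form.fls
  | a :: as => as.foldl Form.or a

/-- iterated conjunction, associated to the left; ⊤ when empty -/
def andList {α : Type} : List (Form α) → Form α
  | []      => Form.tru
  | a :: as => as.foldl Form.and a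

/- Ordered disjunction and disjunction agree on total interpretations, but at ⟨H,T⟩ the second
disjunct of `F × G` also needs `¬F` to hold at `T`. Relative to a fixed `T`, the HT-models of
`{p ∨ q, q}` are the `H ∋ q`, while those of `{p × q, q}` are the `H ∋ q` that also contain `p`
when `p ∈ T`. An equilibrium model is a `T` that is the least such `H`, which yields `{q}`
in the first case and, depending on whether `p ∈ T`, `{q}` or `{p, q}` in the second. -/

namespace Form

variable {α : Type} {H T : Set α}

theorem csat_of_htsat (hHT : H ⊆ T) : ∀ {F : Form α}, htsat H T F → csat T F
  | atom _, h => hHT h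
  | and _ _, ⟨hF, hG⟩ => ⟨csat_of_htsat hHT hF, csat_of_htsat hHT hG⟩
  | or _ _, .inl hF => .inl (csat_of_htsat hHT hF)
  | or _ _, .inr hG => .inr (csat_of_htsat hHT hG)
  | imp _ _, ⟨h, _⟩ => h

theorem htsat_neg_iff (hHT : H ⊆ T) (F : Form α) : htsat H T (neg F) ↔ ¬ csat T F := by
  simp only [neg, htsat, csat, or_false]
  exact ⟨And.left, fun hF => ⟨hF, fun h => hF (csat_of_htsat hHT h)⟩⟩

theorem htsat_ox_iff (hHT : H ⊆ T) (F G : Form α) :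
    htsat H T (ox F G) ↔ htsat H T F ∨ (¬ csat T F ∧ htsat H T G) := by
  rw [ox, htsat, htsat, htsat_neg_iff hHT]

theorem csat_ox_iff_csat_or (F G : Form α) (T : Set α) :
    csat T (ox F G) ↔ csat T (or F G) := by
  simp only [ox, neg, csat]
  tauto

end Form

theorem not_htEquiv_ox_or {α : Type} {F G : Form α} {H T : Set α} (hHT : H ⊆ T)
    (hF : ¬ Form.htsat H T F) (hFT : Form.csat T F) (hG : Form.htsat H T G) :
    ¬ HTEquiv (Form.ox F G) (Form.or F G) := fun h => by
  have hox := (h H T hHT).2 (.inr hG)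
  rw [Form.htsat_ox_iff hHT] at hox
  tauto

theorem Set.eq_iff_subset_and_forall_ssubset_not_subset {α : Type} {s T : Set α} :
    T = s ↔ s ⊆ T ∧ ∀ H, H ⊂ T → ¬ s ⊆ H := by
  refine ⟨?_, fun ⟨hsT, hmin⟩ => ?_⟩
  · rintro rfl
    exact ⟨subset_rfl, fun H hH hsH => hH.2 hsH⟩
  · by_contra hne
    exact hmin s (hsT.ssubset_of_ne (Ne.symm hne)) subset_rfl

theorem eqModel_iff_eq_of_htsat_iff_subset {α : Type} {Γ : Set (Form α)} {T s : Set α}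
    (hΓ : ∀ H, H ⊆ T → ((∀ F ∈ Γ, Form.htsat H T F) ↔ s ⊆ H)) : EqModel Γ T ↔ T = s := by
  rw [EqModel, Set.eq_iff_subset_and_forall_ssubset_not_subset, hΓ T subset_rfl]
  exact and_congr_right fun _ => forall₂_congr fun H hH => not_congr (hΓ H hH.1)

section TwoAtoms

variable {α : Type} {p q : α}

theorem eqModel_or_atom_atom_iff (T : Set α) :
    EqModel {Form.or (Form.atom p) (Form.atom q), Form.atom q} T ↔ T = {q} := by
  refine eqModel_iff_eq_of_htsat_iff_subset fun H _ => ?_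
  simp only [Set.forall_mem_insert, Set.mem_singleton_iff, forall_eq, Set.singleton_subset_iff,
    Form.htsat]
  tauto

theorem forall_htsat_ox_atom_atom_iff {H T : Set α} (hHT : H ⊆ T) :
    (∀ F ∈ ({Form.ox (Form.atom p) (Form.atom q), Form.atom q} : Set (Form α)),
      Form.htsat H T F) ↔ q ∈ H ∧ (p ∈ T → p ∈ H) := by
  simp only [Set.forall_mem_insert, Set.mem_singleton_iff, forall_eq, Form.htsat_ox_iff hHT,
    Form.htsat, Form.csat]
  tauto

theorem eqModel_ox_atom_atom_iff (hpq : p ≠ q) (T : Set α) :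
    EqModel {Form.ox (Form.atom p) (Form.atom q), Form.atom q} T ↔ T = {q} ∨ T = {p, q} := by
  by_cases hp : p ∈ T
  · have hT : T ≠ {q} := fun h => hpq (by simpa [h] using hp)
    rw [eqModel_iff_eq_of_htsat_iff_subset (s := {p, q}) fun H hHT => ?_]
    · tauto
    · rw [forall_htsat_ox_atom_atom_iff hHT, Set.insert_subset_iff, Set.singleton_subset_iff]
      tauto
  · have hT : T ≠ {p, q} := fun h => hp (h ▸ Set.mem_insert p {q})
    rw [eqModel_iff_eq_of_htsat_iff_subset (s := {q}) fun H hHT => ?_]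
    · tauto
    · rw [forall_htsat_ox_atom_atom_iff hHT, Set.singleton_subset_iff]
      tauto

end TwoAtoms

theorem ox_classically_but_not_ht_equiv_or {α : Type} (p q : α) (hpq : p ≠ q) :
    (∀ (F G : Form α) (T : Set α),
        Form.csat T (Form.ox F G) ↔ Form.csat T (Form.or F G)) ∧
    ¬ HTEquiv (Form.ox (Form.atom p) (Form.atom q))
        (Form.or (Form.atom p) (Form.atom q)) ∧
    ({T : Set α |
        EqModel {Form.or (Form.atom p) (Form.atom q), Form.atom q} T} = {{q}}) ∧
    ({T : Set α |
        EqModel {Form.ox (Form.atom p) (Form.atom q), Form.atom q} T} =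
      {{q}, {p, q}}) := by
  refine ⟨Form.csat_ox_iff_csat_or, ?_, ?_, ?_⟩
  · exact not_htEquiv_ox_or (H := {q}) (T := {p, q})
      (Set.singleton_subset_iff.2 (Set.mem_insert_of_mem p rfl)) hpq (.inl rfl) rfl
  · ext T
    exact eqModel_or_atom_atom_iff T
  · ext T
    exact eqModel_ox_atom_atom_iff hpq T
end

section
/- For all formulas F, G, H, the formula F × (G ∨ H) is HT-equivalent to (F × G) ∨ (F × H): every HT-interpretation satisfies one iff it satisfies the other. -/
namespace Form

variable {α : Type} (H T : Set α)

theorem htsat_or (F G : Form α) :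
    htsat H T (or F G) ↔ htsat H T F ∨ htsat H T G := Iff.rfl

theorem htsat_ox (F G : Form α) :
    htsat H T (ox F G) ↔ htsat H T F ∨ (htsat H T (neg F) ∧ htsat H T G) := Iff.rfl

end Form

theorem ox_distrib_over_or_right {α : Type} (F G K : Form α) :
    HTEquiv (Form.ox F (Form.or G K)) (Form.or (Form.ox F G) (Form.ox F K)) := by
  intro H T _
  -- the satisfaction clauses of ∨ and ∧ are Boolean, so this is the distributive law
  -- a ∨ n ∧ (g ∨ k) ↔ (a ∨ n ∧ g) ∨ (a ∨ n ∧ k), whatever ¬F means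
  simp only [Form.htsat_ox, Form.htsat_or]
  rw [and_or_left, or_or_distrib_left]
end
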